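/- Let d = 2, c > 0 and R > 0. There is a constant C = C(c,R) such that for all t > 0 and all y ∈ ℝ²: ∫_{|x| ≥ R} |x|^{−2} Γ(t, c(x−y)) dx ≤ C log(2+t)/(1+t), where Γ(t,z) = (4πt)^{−1} e^{−|z|²/(4t)}. -/

import Mathlib

/-!
Write `g(x) = Γ(t, c(x - y))`, so that `0 ≤ g ≤ (4πt)⁻¹` and `∫ g = c⁻²`. For any `S ≥ R`, bound
`|x|⁻² g(x)` by `(4πt)⁻¹ |x|⁻²` on the annulus `R ≤ |x| ≤ S`, where `|x|⁻²` integrates to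
`2π log (S / R)`, and by `S⁻² g(x)` outside it. Taking `S = R √(1 + t)` gives the bound
`log (1 + t) / (4t) + (cR)⁻² / (1 + t)`, and `log (1 + t) / t ≤ 3 log (2 + t) / (1 + t)`.
-/

open MeasureTheory Real Metric Set Module

section Annulus

variable {E : Type*} [NormedAddCommGroup E] [NormedSpace ℝ E] [FiniteDimensional ℝ E]
  [MeasurableSpace E] [BorelSpace E] (μ : Measure E) [μ.IsAddHaarMeasure]

theorem integral_annulus_inv_norm_pow [Nontrivial E] {R S : ℝ} (hR : 0 < R) (hRS : R ≤ S) :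
    ∫ x in {x : E | ‖x‖ ∈ Icc R S}, (‖x‖ ^ finrank ℝ E)⁻¹ ∂μ
      = finrank ℝ E * μ.real (ball 0 1) * log (S / R) := by
  have hn : 0 < finrank ℝ E := finrank_pos
  have hradial : ∀ y : ℝ,
      y ^ (finrank ℝ E - 1) • (Icc R S).indicator (fun r ↦ (r ^ finrank ℝ E)⁻¹) y
        = (Icc R S).indicator (fun r ↦ r⁻¹) y := by
    intro y
    by_cases hy : y ∈ Icc R S
    · have hy0 : y ≠ 0 := (hR.trans_le hy.1).ne'
      obtain ⟨k, hk⟩ := Nat.exists_eq_add_one_of_ne_zero hn.ne'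
      rw [indicator_of_mem hy, indicator_of_mem hy, smul_eq_mul, hk, Nat.add_sub_cancel, pow_succ]
      field_simp
    · simp [hy]
  rw [← integral_indicator (s := {x : E | ‖x‖ ∈ Icc R S}) (measurable_norm measurableSet_Icc),
    show indicator {x : E | ‖x‖ ∈ Icc R S} (fun x ↦ (‖x‖ ^ finrank ℝ E)⁻¹)
      = fun x ↦ (Icc R S).indicator (fun r ↦ (r ^ finrank ℝ E)⁻¹) ‖x‖ from
      funext fun x ↦ indicator_comp_right (fun x : E ↦ ‖x‖) (s := Icc R S)
        (g := fun r ↦ (r ^ finrank ℝ E)⁻¹),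
    integral_fun_norm_addHaar μ, funext hradial, setIntegral_indicator measurableSet_Icc,
    inter_eq_self_of_subset_right (s := Ioi 0) fun y hy ↦ hR.trans_le hy.1,
    integral_Icc_eq_integral_Ioc, ← intervalIntegral.integral_of_le hRS,
    integral_inv_of_pos hR (hR.trans_le hRS), nsmul_eq_mul, smul_eq_mul, mul_assoc]

theorem setIntegral_inv_norm_pow_mul_le [Nontrivial E] {g : E → ℝ} {M R S : ℝ}
    (hg : ∀ x, 0 ≤ g x) (hgM : ∀ x, g x ≤ M) (hgi : Integrable g μ) (hR : 0 < R) (hRS : R ≤ S) :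
    ∫ x in {x : E | R ≤ ‖x‖}, (‖x‖ ^ finrank ℝ E)⁻¹ * g x ∂μ
      ≤ M * (finrank ℝ E * μ.real (ball 0 1) * log (S / R))
        + (S ^ finrank ℝ E)⁻¹ * ∫ x, g x ∂μ := by
  set n := finrank ℝ E
  set A := {x : E | ‖x‖ ∈ Icc R S}
  have hA : MeasurableSet A := measurable_norm measurableSet_Icc
  have hM : 0 ≤ M := (hg 0).trans (hgM 0)
  have hS : 0 < S := hR.trans_le hRS
  have hAi : IntegrableOn (fun x ↦ (‖x‖ ^ n)⁻¹) A μ := by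
    refine ContinuousOn.integrableOn_compact ?_ ?_
    · exact (isCompact_closedBall (0 : E) S).of_isClosed_subset
        (isClosed_Icc.preimage continuous_norm) fun x hx ↦ by simpa using hx.2
    · exact (continuous_norm.pow n).continuousOn.inv₀ fun x hx ↦
        pow_ne_zero n (hR.trans_le hx.1).ne'
  have hbound : ∀ x : E, R ≤ ‖x‖ →
      (‖x‖ ^ n)⁻¹ * g x ≤ M * A.indicator (fun x ↦ (‖x‖ ^ n)⁻¹) x + (S ^ n)⁻¹ * g x := by
    intro x hx
    by_cases hxS : ‖x‖ ≤ S
    · rw [indicator_of_mem (show x ∈ A from ⟨hx, hxS⟩)]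
      have : 0 ≤ (S ^ n)⁻¹ * g x := mul_nonneg (by positivity) (hg x)
      nlinarith [mul_le_mul_of_nonneg_left (hgM x) (by positivity : 0 ≤ (‖x‖ ^ n)⁻¹)]
    · rw [indicator_of_notMem (show x ∉ A from fun h ↦ hxS h.2), mul_zero, zero_add]
      exact mul_le_mul_of_nonneg_right
        (inv_anti₀ (pow_pos hS n) (pow_le_pow_left₀ hS.le (not_le.1 hxS).le n)) (hg x)
  have hmajorant : Integrable (fun x ↦ M * A.indicator (fun x ↦ (‖x‖ ^ n)⁻¹) x
      + (S ^ n)⁻¹ * g x) μ :=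
    (((integrable_indicator_iff hA).2 hAi).const_mul M).add (hgi.const_mul _)
  calc ∫ x in {x : E | R ≤ ‖x‖}, (‖x‖ ^ n)⁻¹ * g x ∂μ
      ≤ ∫ x in {x : E | R ≤ ‖x‖}, M * A.indicator (fun x ↦ (‖x‖ ^ n)⁻¹) x
          + (S ^ n)⁻¹ * g x ∂μ := by
        refine integral_mono_of_nonneg (.of_forall fun x ↦ mul_nonneg (by positivity) (hg x))
          hmajorant.restrict ?_
        filter_upwards [ae_restrict_mem
          (isClosed_le continuous_const continuous_norm).measurableSet] with x hx
        exact hbound x hx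
    _ ≤ ∫ x, M * A.indicator (fun x ↦ (‖x‖ ^ n)⁻¹) x + (S ^ n)⁻¹ * g x ∂μ :=
        setIntegral_le_integral hmajorant (.of_forall fun x ↦
          add_nonneg (mul_nonneg hM (indicator_nonneg (fun _ _ ↦ by positivity) x))
            (mul_nonneg (by positivity) (hg x)))
    _ = M * ∫ x in A, (‖x‖ ^ n)⁻¹ ∂μ + (S ^ n)⁻¹ * ∫ x, g x ∂μ := by
        rw [integral_add (((integrable_indicator_iff hA).2 hAi).const_mul M) (hgi.const_mul _),
          integral_const_mul, integral_const_mul, integral_indicator hA]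
    _ = _ := by rw [integral_annulus_inv_norm_pow μ hR hRS]

end Annulus

section HeatKernel

noncomputable def heatKernel (t : ℝ) (z : EuclideanSpace ℝ (Fin 2)) : ℝ :=
  (4 * π * t)⁻¹ * exp (-‖z‖ ^ 2 / (4 * t))

variable {t : ℝ}

theorem heatKernel_nonneg (ht : 0 ≤ t) (z : EuclideanSpace ℝ (Fin 2)) : 0 ≤ heatKernel t z := by
  unfold heatKernel
  positivity

theorem heatKernel_le (ht : 0 ≤ t) (z : EuclideanSpace ℝ (Fin 2)) :
    heatKernel t z ≤ (4 * π * t)⁻¹ := by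
  refine mul_le_of_le_one_right (by positivity) (exp_le_one_iff.2 ?_)
  exact div_nonpos_of_nonpos_of_nonneg (neg_nonpos.2 (sq_nonneg _)) (by positivity)

theorem integral_heatKernel (ht : 0 < t) : ∫ z, heatKernel t z = 1 := by
  have hb : 0 < (4 * t)⁻¹ := by positivity
  simp_rw [heatKernel, neg_div, div_eq_inv_mul _ (4 * t), ← neg_mul]
  rw [integral_const_mul, GaussianFourier.integral_rexp_neg_mul_sq_norm hb,
    finrank_euclideanSpace_fin]
  norm_num
  field_simp

theorem integrable_heatKernel (ht : 0 < t) : Integrable (heatKernel t) :=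
  Integrable.of_integral_ne_zero (by rw [integral_heatKernel ht]; exact one_ne_zero)

theorem integrable_heatKernel_smul_sub {c : ℝ} (hc : c ≠ 0) (y : EuclideanSpace ℝ (Fin 2))
    (ht : 0 < t) : Integrable fun x ↦ heatKernel t (c • (x - y)) :=
  ((integrable_heatKernel ht).comp_smul hc).comp_sub_right y

-- At `c = 0` both sides vanish: the constant integrand is not integrable and `0⁻¹ = 0`.
theorem integral_heatKernel_smul_sub (c : ℝ) (y : EuclideanSpace ℝ (Fin 2)) (ht : 0 < t) :
    ∫ x, heatKernel t (c • (x - y)) = (c ^ 2)⁻¹ := by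
  rw [integral_sub_right_eq_self (fun z ↦ heatKernel t (c • z)) y,
    Measure.integral_comp_smul, integral_heatKernel ht, finrank_euclideanSpace_fin,
    smul_eq_mul, mul_one, abs_of_nonneg (by positivity)]

end HeatKernel

theorem one_le_two_mul_log_two_add {t : ℝ} (ht : 0 ≤ t) : 1 ≤ 2 * log (2 + t) := by
  have := log_two_gt_d9
  have := log_le_log two_pos (show (2 : ℝ) ≤ 2 + t by linarith)
  linarith

theorem log_one_add_div_le {t : ℝ} (ht : 0 < t) :
    log (1 + t) / t ≤ 3 * log (2 + t) / (1 + t) := by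
  have hlog : log (1 + t) ≤ log (2 + t) := log_le_log (by linarith) (by linarith)
  have hlin : log (1 + t) ≤ t := by linarith [log_le_sub_one_of_pos (show 0 < 1 + t by linarith)]
  have := one_le_two_mul_log_two_add ht.le
  rw [div_le_div_iff₀ ht (by linarith)]
  nlinarith

/-- In dimension 2, `∫_{|x| ≥ R} |x|^{-2} Γ(t, c(x-y)) dx ≤ C log(2+t)/(1+t)`,
uniformly in `y`. -/
theorem stmt_14 (c R : ℝ) (hc : 0 < c) (hR : 0 < R) :
    ∃ C : ℝ, 0 < C ∧ ∀ (t : ℝ), 0 < t → ∀ y : EuclideanSpace ℝ (Fin 2),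
      (∫ x in {x : EuclideanSpace ℝ (Fin 2) | R ≤ ‖x‖},
          ‖x‖ ^ (-(2:ℝ)) * ((4 * π * t)⁻¹ * Real.exp (-‖c • (x - y)‖ ^ 2 / (4 * t))))
        ≤ C * Real.log (2 + t) / (1 + t) := by
  refine ⟨3 / 4 + 2 / (c * R) ^ 2, by positivity, fun t ht y ↦ ?_⟩
  have hRS : R ≤ R * √(1 + t) := le_mul_of_one_le_right hR.le (one_le_sqrt.2 (by linarith))
  have key := setIntegral_inv_norm_pow_mul_le volume
    (fun x ↦ heatKernel_nonneg ht.le (c • (x - y))) (fun x ↦ heatKernel_le ht.le (c • (x - y)))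
    (integrable_heatKernel_smul_sub hc.ne' y ht) hR hRS
  have hball : volume.real (ball (0 : EuclideanSpace ℝ (Fin 2)) 1) = π := by
    simp [measureReal_def, pi_nonneg]
  have hlog : log (R * √(1 + t) / R) = log (1 + t) / 2 := by
    rw [mul_div_cancel_left₀ _ hR.ne', log_sqrt (by linarith)]
  rw [integral_heatKernel_smul_sub c y ht, finrank_euclideanSpace_fin, hball, hlog] at key
  have hrpow : ∀ x : EuclideanSpace ℝ (Fin 2), ‖x‖ ^ (-(2:ℝ)) = (‖x‖ ^ 2)⁻¹ := fun x ↦ by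
    rw [rpow_neg (norm_nonneg x), rpow_two]
  simp only [hrpow]
  calc _ ≤ _ := key
    _ = log (1 + t) / t / 4 + ((c * R) ^ 2)⁻¹ / (1 + t) := by
        rw [mul_pow, sq_sqrt (by linarith)]
        field_simp
        ring
    _ ≤ 3 * log (2 + t) / (1 + t) / 4 + ((c * R) ^ 2)⁻¹ * (2 * log (2 + t)) / (1 + t) := by
        gcongr ?_ / 4 + ?_ / (1 + t)
        · exact log_one_add_div_le ht
        · exact le_mul_of_one_le_right (by positivity) (one_le_two_mul_log_two_add ht.le)
    _ = _ := by ring
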